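/- arXiv:2412.14784 — 4 statements merged into one kernel-verified Lean document; each statement's English description precedes it below -/
import Mathlib

section
/- For every n ≥ 1 and every integer k ≥ 3, there exists an n-vertex planar graph G such that every subset I ⊆ V(G) for which the induced subgraph G[I] has maximum degree at most k satisfies |I| ≤ ((k+2)/(k+4))·n + 2. -/
open SimpleGraph

/-- `H` is a minor of `G`: disjoint connected branch sets witnessing every edge of `H`. -/
def IsMinorOf {β α : Type} (H : SimpleGraph β) (G : SimpleGraph α) : Prop :=
  ∃ f : β → Set α,
    (∀ b, (f b).Nonempty) ∧
    (∀ b, (G.induce (f b)).Connected) ∧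
    (Pairwise fun b₁ b₂ => Disjoint (f b₁) (f b₂)) ∧
    ∀ ⦃b₁ b₂⦄, H.Adj b₁ b₂ → ∃ u ∈ f b₁, ∃ v ∈ f b₂, G.Adj u v

/-- A graph is planar iff it has neither a `K₅` nor a `K₃,₃` minor (Wagner's theorem). -/
def IsPlanar {α : Type} (G : SimpleGraph α) : Prop :=
  ¬ IsMinorOf (completeGraph (Fin 5)) G ∧
  ¬ IsMinorOf (completeBipartiteGraph (Fin 3) (Fin 3)) G

/-- A graph is outerplanar iff it has neither a `K₄` nor a `K₂,₃` minor. -/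
def IsOuterplanar {α : Type} (G : SimpleGraph α) : Prop :=
  ¬ IsMinorOf (completeGraph (Fin 4)) G ∧
  ¬ IsMinorOf (completeBipartiteGraph (Fin 2) (Fin 3)) G

/-- An outerpath is (isomorphic to) a spanning subgraph of the square of a path:
there is a linear ordering of the vertices in which every edge joins vertices
at distance at most `2`. -/
def IsOuterpath {α : Type} [Fintype α] (G : SimpleGraph α) : Prop :=
  ∃ σ : α ≃ Fin (Fintype.card α),
    ∀ u v, G.Adj u v → (σ u).val ≤ (σ v).val + 2 ∧ (σ v).val ≤ (σ u).val + 2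

/-- Arc of the outer cycle `0,1,…,n-1` from `a` to `b` (inclusive): the vertex set of
one of the two `ab`-split subgraphs of a maximal outerplanar graph whose
outerplane embedding has the canonical outer cycle on `ZMod n`. -/
def arc (n : ℕ) [NeZero n] (a b : ZMod n) : Set (ZMod n) := {w | (w - a).val ≤ (b - a).val}

/-! The witness is a disjoint union of `⌊n/(k+4)⌋` copies of `K₂,ₖ₊₂` together with isolated
vertices. A set `I` inducing maximum degree at most `k` misses two vertices of every copy: if a
hub lies in `I`, at most `k` of its `k+2` leaves do. The graph has no `K₅` and no `K₃,₃` minor,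
since in a minor model of a graph of minimum degree three, among the three branch sets adjacent
to a common one some branch set avoids the (at most two) hubs of its component, and then all of
its at least three neighbours must each contain one of those hubs. -/

open Finset

section MinorFree

variable {V W ι : Type} {G : SimpleGraph V} {H : SimpleGraph W}

lemma apply_eq_of_reachable (block : V → ι) (hblock : ∀ ⦃u v⦄, G.Adj u v → block u = block v)
    {u v : V} (h : G.Reachable u v) : block u = block v := by
  obtain ⟨p⟩ := h
  induction p with
  | nil => rfl
  | cons h _ ih => exact (hblock h).trans ih

lemma apply_eq_of_induce_connected (block : V → ι) (hblock : ∀ ⦃u v⦄, G.Adj u v → block u = block v)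
    {s : Set V} (hs : (G.induce s).Connected) {u v : V} (hu : u ∈ s) (hv : v ∈ s) :
    block u = block v :=
  apply_eq_of_reachable block hblock <|
    (hs.preconnected ⟨u, hu⟩ ⟨v, hv⟩).map (Embedding.induce s).toHom

theorem not_isMinorOf_of_hubs (block : V → ι) (hub : Set V)
    (hblock : ∀ ⦃u v⦄, G.Adj u v → block u = block v)
    (hhub : ∀ ⦃u v⦄, G.Adj u v → u ∈ hub ∨ v ∈ hub)
    (hthree : ∀ u ∈ hub, ∀ v ∈ hub, ∀ w ∈ hub, block u = block v → block u = block w →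
      u = v ∨ u = w ∨ v = w)
    [Nonempty W]
    (hH : ∀ w, ∃ x y z, H.Adj w x ∧ H.Adj w y ∧ H.Adj w z ∧ x ≠ y ∧ x ≠ z ∧ y ≠ z) :
    ¬ IsMinorOf H G := by
  rintro ⟨f, hne, hconn, hdisj, hadj⟩
  have hsame : ∀ w, ∀ u ∈ f w, ∀ v ∈ f w, block u = block v := fun w _ hu _ hv =>
    apply_eq_of_induce_connected block hblock (hconn w) hu hv
  have hnbr : ∀ ⦃w w'⦄, H.Adj w w' → ∀ u ∈ f w, ∀ v ∈ f w', block u = block v := by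
    intro w w' hww' u hu v hv
    obtain ⟨u', hu', v', hv', huv'⟩ := hadj hww'
    rw [hsame w u hu u' hu', hblock huv', hsame w' v' hv' v hv]
  have hpigeon : ∀ i x y z, x ≠ y → x ≠ z → y ≠ z →
      ¬ ∀ c ∈ ({x, y, z} : Set W), ∃ u ∈ f c, u ∈ hub ∧ block u = i := by
    rintro i x y z hxy hxz hyz hall
    obtain ⟨p, hp, hphub, rfl⟩ := hall x (by simp)
    obtain ⟨q, hq, hqhub, hqi⟩ := hall y (by simp)
    obtain ⟨r, hr, hrhub, hri⟩ := hall z (by simp)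
    rcases hthree p hphub q hqhub r hrhub hqi.symm hri.symm with rfl | rfl | rfl
    · exact Set.disjoint_left.mp (hdisj hxy) hp hq
    · exact Set.disjoint_left.mp (hdisj hxz) hp hr
    · exact Set.disjoint_left.mp (hdisj hyz) hq hr
  obtain ⟨w₀⟩ := ‹Nonempty W›
  obtain ⟨u₀, hu₀⟩ := hne w₀
  obtain ⟨x, y, z, hx, hy, hz, hxy, hxz, hyz⟩ := hH w₀
  obtain ⟨c, hc, hcfree⟩ : ∃ c ∈ ({x, y, z} : Set W), ∀ u ∈ f c, u ∉ hub := by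
    by_contra! h
    refine hpigeon (block u₀) x y z hxy hxz hyz fun c hc => ?_
    obtain ⟨u, hu, huhub⟩ := h c hc
    refine ⟨u, hu, huhub, (hnbr ?_ u₀ hu₀ u hu).symm⟩
    rcases hc with rfl | rfl | rfl <;> assumption
  obtain ⟨u₁, hu₁⟩ := hne c
  have hcblock : block u₁ = block u₀ := by
    have hw₀c : H.Adj w₀ c := by rcases hc with rfl | rfl | rfl <;> assumption
    exact (hnbr hw₀c u₀ hu₀ u₁ hu₁).symm
  obtain ⟨x', y', z', hx', hy', hz', hxy', hxz', hyz'⟩ := hH c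
  refine hpigeon (block u₀) x' y' z' hxy' hxz' hyz' fun d hd => ?_
  have hcd : H.Adj c d := by rcases hd with rfl | rfl | rfl <;> assumption
  obtain ⟨u, hu, v, hv, huv⟩ := hadj hcd
  refine ⟨v, hv, (hhub huv).resolve_left (hcfree u hu), ?_⟩
  rw [← hcblock, hsame c u₁ hu₁ u hu]
  exact (hblock huv).symm

end MinorFree

section Counting

variable {V : Type} [Finite V] {G : SimpleGraph V} {k : ℕ} {I : Set V}

lemma card_filter_mem_le_of_forall_adj [DecidablePred (· ∈ I)]
    (hI : ∀ v ∈ I, (G.neighborSet v ∩ I).ncard ≤ k) {a : V} (ha : a ∈ I) {L : Finset V}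
    (haL : ∀ v ∈ L, G.Adj a v) : #{v ∈ L | v ∈ I} ≤ k := by
  rw [← Set.ncard_coe_finset]
  refine le_trans (Set.ncard_le_ncard ?_) (hI a ha)
  intro v hv
  simp only [coe_filter, Set.mem_ofPred_eq] at hv
  exact ⟨haL v hv.1, hv.2⟩

lemma two_le_card_filter_notMem [DecidableEq V] [DecidablePred (· ∈ I)]
    (hI : ∀ v ∈ I, (G.neighborSet v ∩ I).ncard ≤ k)
    {S L : Finset V} {a b : V} (ha : a ∈ S) (hb : b ∈ S) (hab : a ≠ b) (hLS : L ⊆ S)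
    (hL : k + 2 ≤ #L) (haL : ∀ v ∈ L, G.Adj a v) (hbL : ∀ v ∈ L, G.Adj b v) :
    2 ≤ #{v ∈ S | v ∉ I} := by
  have hleaves : ∀ c ∈ I, (∀ v ∈ L, G.Adj c v) → 2 ≤ #{v ∈ S | v ∉ I} := by
    intro c hc hcL
    have := card_filter_mem_le_of_forall_adj hI hc hcL
    have := L.card_filter_add_card_filter_not (· ∈ I)
    calc 2 ≤ #{v ∈ L | v ∉ I} := by omega
      _ ≤ #{v ∈ S | v ∉ I} := card_le_card (filter_subset_filter _ hLS)
  by_cases haI : a ∈ I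
  · exact hleaves a haI haL
  by_cases hbI : b ∈ I
  · exact hleaves b hbI hbL
  calc 2 = #{a, b} := (card_pair hab).symm
    _ ≤ #{v ∈ S | v ∉ I} := card_le_card <| by
      simp [insert_subset_iff, ha, hb, haI, hbI]

end Counting

/-- Vertex `v` lies in block `v / m`; each of the `n / m` complete blocks is a `K₂,ₘ₋₂` with hubs
at positions `0` and `1`, and the vertices of the incomplete last block are isolated. -/
def hubBlockGraph (n m : ℕ) : SimpleGraph (Fin n) where
  Adj u v := (u : ℕ) / m = v / m ∧ (u : ℕ) / m < n / m ∧ Xor ((u : ℕ) % m < 2) ((v : ℕ) % m < 2)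
  symm := ⟨fun _ _ h => ⟨h.1.symm, h.1 ▸ h.2.1, (xor_comm _ _).mp h.2.2⟩⟩
  loopless := ⟨fun _ h => by simpa using h.2.2⟩

lemma hubBlockGraph_adj_of_mod_lt_two {n m : ℕ} {u v : Fin n} (huv : (u : ℕ) / m = v / m)
    (hu : (u : ℕ) / m < n / m) (hu₂ : (u : ℕ) % m < 2) (hv₂ : 2 ≤ (v : ℕ) % m) :
    (hubBlockGraph n m).Adj u v :=
  ⟨huv, hu, xor_def.2 (Or.inl ⟨hu₂, by omega⟩)⟩

lemma Nat.div_eq_and_mod_eq_of_le_of_lt {x m i : ℕ} (h₁ : i * m ≤ x) (h₂ : x < i * m + m) :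
    x / m = i ∧ x % m = x - i * m := by
  have hdiv : x / m = i := (Nat.div_eq_iff (by omega)).2 ⟨h₁, by omega⟩
  refine ⟨hdiv, ?_⟩
  rw [Nat.mod_eq_sub_mul_div, hdiv, Nat.mul_comm]

lemma two_le_card_filter_notMem_div_eq {n m k : ℕ} (hkm : k + 4 ≤ m) {I : Set (Fin n)}
    [DecidablePred (· ∈ I)] (hI : ∀ v ∈ I, ((hubBlockGraph n m).neighborSet v ∩ I).ncard ≤ k)
    {i : ℕ} (hi : i < n / m) :
    2 ≤ #{v : Fin n | v ∉ I ∧ (v : ℕ) / m = i} := by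
  have hin : i * m + m ≤ n := by
    simpa [Nat.succ_mul] using (Nat.le_div_iff_mul_le (by omega : 0 < m)).1 hi
  have hblock : ∀ x : ℕ, i * m ≤ x → x < i * m + m → x / m = i ∧ x % m = x - i * m :=
    fun _ => Nat.div_eq_and_mod_eq_of_le_of_lt
  set S : Finset (Fin n) := {v | (v : ℕ) / m = i}
  set L : Finset (Fin n) := {v ∈ S | 2 ≤ (v : ℕ) % m}
  have hL : k + 2 ≤ #L :=
    calc k + 2 ≤ #(Ico (i * m + 2) (i * m + m)) := by simp; omega
      _ ≤ #(L.map Fin.valEmbedding) := card_le_card fun x hx => by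
        simp only [mem_Ico] at hx
        obtain ⟨hdiv, hmod⟩ := hblock x (by omega) (by omega)
        exact mem_map.2 ⟨⟨x, by omega⟩, by simp [L, S, hdiv, hmod]; omega, rfl⟩
      _ = #L := card_map _
  have hhub : ∀ c : Fin n, (c : ℕ) / m = i → (c : ℕ) % m < 2 →
      ∀ v ∈ L, (hubBlockGraph n m).Adj c v := by
    intro c hc hc₂ v hv
    simp only [L, S, mem_filter, mem_univ, true_and] at hv
    exact hubBlockGraph_adj_of_mod_lt_two (hc.trans hv.1.symm) (hc ▸ hi) hc₂ hv.2
  obtain ⟨a, ha⟩ : ∃ a : Fin n, (a : ℕ) = i * m := ⟨⟨i * m, by omega⟩, rfl⟩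
  obtain ⟨b, hb⟩ : ∃ b : Fin n, (b : ℕ) = i * m + 1 := ⟨⟨i * m + 1, by omega⟩, rfl⟩
  obtain ⟨ha₁, ha₂⟩ := hblock a (by omega) (by omega)
  obtain ⟨hb₁, hb₂⟩ := hblock b (by omega) (by omega)
  rw [← filter_filter, filter_comm]
  exact two_le_card_filter_notMem hI (by simp [ha₁]) (by simp [hb₁])
    (fun h => by simp [h] at ha hb; omega) (filter_subset _ _) hL
    (hhub a ha₁ (by omega)) (hhub b hb₁ (by omega))

lemma ncard_add_two_mul_div_le {n m k : ℕ} (hkm : k + 4 ≤ m) {I : Set (Fin n)}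
    (hI : ∀ v ∈ I, ((hubBlockGraph n m).neighborSet v ∩ I).ncard ≤ k) :
    I.ncard + 2 * (n / m) ≤ n := by
  classical
  set missed : Finset (Fin n) := {v | v ∉ I}
  have hmissed : 2 * (n / m) ≤ #missed :=
    calc 2 * (n / m) = ∑ _i ∈ range (n / m), 2 := by simp [mul_comm]
      _ ≤ ∑ i ∈ range (n / m), #{v ∈ missed | ((v : Fin n) : ℕ) / m = i} :=
        sum_le_sum fun i hi => by
          simpa only [missed, filter_filter] using
            two_le_card_filter_notMem_div_eq hkm hI (mem_range.1 hi)
      _ = #{v ∈ missed | ((v : Fin n) : ℕ) / m ∈ range (n / m)} :=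
        sum_card_fiberwise_eq_card_filter _ _ _
      _ ≤ #missed := card_filter_le _ _
  have hsplit : I.ncard + #missed = n := by
    have hcompl : Iᶜ.ncard = #missed := by
      rw [Set.ncard_eq_toFinset_card']
      congr 1
      ext
      simp [missed]
    simpa [hcompl] using Set.ncard_add_ncard_compl I
  omega

lemma hubBlockGraph_not_isMinorOf {n m : ℕ} {W : Type} (H : SimpleGraph W) [Nonempty W]
    (hH : ∀ w, ∃ x y z, H.Adj w x ∧ H.Adj w y ∧ H.Adj w z ∧ x ≠ y ∧ x ≠ z ∧ y ≠ z) :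
    ¬ IsMinorOf H (hubBlockGraph n m) := by
  refine not_isMinorOf_of_hubs (fun v : Fin n => (v : ℕ) / m) {v | (v : ℕ) % m < 2}
    (fun _ _ h => h.1) (fun _ _ h => h.2.2.or) ?_ hH
  intro u hu v hv w hw huv huw
  have hu' := Nat.div_add_mod u m
  have hv' := Nat.div_add_mod v m
  have hw' := Nat.div_add_mod w m
  simp only [Set.mem_ofPred_eq] at hu hv hw huv huw
  rw [← huv] at hv'
  rw [← huw] at hw'
  simp only [Fin.ext_iff]
  omega

theorem stmt3_general (n k : ℕ) :
    ∃ G : SimpleGraph (Fin n), IsPlanar G ∧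
      ∀ I : Set (Fin n), (∀ v ∈ I, ((G.neighborSet v) ∩ I).ncard ≤ k) →
        (I.ncard : ℝ) ≤ (((k : ℝ) + 2) / ((k : ℝ) + 4)) * (n : ℝ) + 2 := by
  refine ⟨hubBlockGraph n (k + 4), ⟨?_, ?_⟩, fun I hI => ?_⟩
  · exact hubBlockGraph_not_isMinorOf _ (by decide)
  · exact hubBlockGraph_not_isMinorOf _ (by simp only [completeBipartiteGraph_adj]; decide)
  have hcount : I.ncard + 2 * (n / (k + 4)) ≤ n := ncard_add_two_mul_div_le le_rfl hI
  have hn : n < n / (k + 4) * (k + 4) + (k + 4) := Nat.lt_div_mul_add (by omega)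
  have hcount' : (I.ncard : ℝ) + 2 * (n / (k + 4) : ℕ) ≤ n := by exact_mod_cast hcount
  have hn' : (n : ℝ) < (n / (k + 4) : ℕ) * (k + 4) + (k + 4) := by exact_mod_cast hn
  rw [div_mul_eq_mul_div, ← sub_le_iff_le_add, le_div_iff₀ (by positivity)]
  nlinarith

/-- For every `n ≥ 1` and `k ≥ 3` there is an `n`-vertex planar graph in which every
vertex subset inducing a subgraph of maximum degree at most `k` has at most
`((k+2)/(k+4))·n + 2` vertices. -/
theorem stmt3 (n k : ℕ) (hn : 1 ≤ n) (hk : 3 ≤ k) :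
    ∃ G : SimpleGraph (Fin n), IsPlanar G ∧
      ∀ I : Set (Fin n), (∀ v ∈ I, ((G.neighborSet v) ∩ I).ncard ≤ k) →
        (I.ncard : ℝ) ≤ (((k : ℝ) + 2) / ((k : ℝ) + 4)) * (n : ℝ) + 2 :=
  stmt3_general n k
end

section
/- Let G be a maximal outerplanar graph on n vertices, let ℓ ≥ 1 be an integer, and let xy be an edge incident to the outer face of the (unique) outerplane embedding of G. If n ≥ ℓ+2, then there exists an edge uv of G such that one of the two uv-split subgraphs H of G has h vertices with ℓ+2 ≤ h ≤ 2ℓ+1, and if uv ≠ xy then H does not contain the edge xy. -/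
/-!
A graph without a `K₄` minor that contains the cycle `0, 1, …, n - 1` has no crossing chords,
so by induction an arc spanning `d` cycle edges carries at most `2 d - 1` edges. With exactly
`2 n - 3` edges the graph is therefore a triangulation: every chord `uv` spanning at least two
cycle edges bounds a triangle `uwv`, and one of the two sub-arcs it cuts off spans at least half
as many cycle edges. Starting from the edge `x(x+1)`, whose arc is the whole cycle, and always
passing to the longer sub-arc, the first arc spanning at most `2ℓ` edges still spans at least
`ℓ + 1`, and after the first step it misses `x` or `x + 1`.
-/

open SimpleGraph

lemma isMinorOf_completeGraph_of_lt {α : Type} {m : ℕ} {H : SimpleGraph α} (f : Fin m → Set α)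
    (hne : ∀ t, (f t).Nonempty) (hconn : ∀ t, (H.induce (f t)).Connected)
    (hdisj : Pairwise fun s t => Disjoint (f s) (f t))
    (hadj : ∀ s t, s < t → ∃ u ∈ f s, ∃ v ∈ f t, H.Adj u v) :
    IsMinorOf (completeGraph (Fin m)) H := by
  refine ⟨f, hne, hconn, hdisj, fun s t hst => ?_⟩
  rcases lt_or_gt_of_ne hst with h | h
  · exact hadj s t h
  · obtain ⟨u, hu, v, hv, huv⟩ := hadj t s h
    exact ⟨v, hv, u, hu, huv.symm⟩

section

variable {n : ℕ} {G : SimpleGraph (ZMod n)}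

lemma val_add_natCast_sub (a : ZMod n) {m : ℕ} (hm : m < n) : (a + m - a).val = m := by
  rw [add_sub_cancel_left, ZMod.val_cast_of_lt hm]

lemma val_sub_pos_of_ne {a z : ZMod n} (h : z ≠ a) : 0 < (z - a).val :=
  Nat.pos_of_ne_zero fun h0 => h (sub_eq_zero.mp ((ZMod.val_eq_zero _).mp h0))

variable [NeZero n]

lemma val_sub_of_lt {a b : ZMod n} (h : a.val < b.val) : (a - b).val = n + a.val - b.val := by
  have hba : (b - a).val = b.val - a.val := ZMod.val_sub h.le
  have : NeZero (b - a) := ⟨fun h0 => by rw [h0, ZMod.val_zero] at hba; omega⟩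
  rw [← neg_sub, ZMod.val_neg_of_ne_zero, hba]
  have := b.val_lt
  omega

lemma val_sub_eq_ite (a z p : ZMod n) :
    (z - p).val = if (p - a).val ≤ (z - a).val then (z - a).val - (p - a).val
      else n + (z - a).val - (p - a).val := by
  rw [← sub_sub_sub_cancel_right z p a]
  split_ifs with h
  exacts [ZMod.val_sub h, val_sub_of_lt (not_le.mp h)]

lemma add_val_sub (a z : ZMod n) : a + ((z - a).val : ZMod n) = z := by
  rw [ZMod.natCast_zmod_val, add_sub_cancel]

lemma eq_of_val_sub_eq {a z w : ZMod n} (h : (z - a).val = (w - a).val) : z = w :=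
  sub_left_injective (ZMod.val_injective n h)

lemma mem_arc_iff_of_le (a : ZMod n) {p q z : ZMod n} (hpq : (p - a).val ≤ (q - a).val) :
    z ∈ arc n p q ↔ (p - a).val ≤ (z - a).val ∧ (z - a).val ≤ (q - a).val := by
  have := (q - a).val_lt
  change (z - p).val ≤ (q - p).val ↔ _
  rw [val_sub_eq_ite a z p, val_sub_eq_ite a q p, if_pos hpq]
  split_ifs <;> omega

lemma mem_arc_swap_iff {u v z : ZMod n} (huv : u ≠ v) :
    z ∈ arc n v u ↔ z = u ∨ (v - u).val ≤ (z - u).val := by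
  have hz := (z - u).val_lt
  have hvn := (v - u).val_lt
  have hv := val_sub_pos_of_ne huv.symm
  have hzu : z = u ↔ (z - u).val = 0 := by rw [ZMod.val_eq_zero, sub_eq_zero]
  change (z - v).val ≤ (u - v).val ↔ _
  rw [val_sub_eq_ite u z v, val_sub_eq_ite u u v, sub_self, ZMod.val_zero, hzu]
  split_ifs <;> omega

lemma ncard_arc (u v : ZMod n) : (arc n u v).ncard = (v - u).val + 1 := by
  change ((fun w => (w - u).val) ⁻¹' Set.Iic (v - u).val).ncard = _
  rw [Set.ncard_preimage_of_injective_subset_range (fun _ _ h => eq_of_val_sub_eq h),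
    Set.ncard_Iic_nat]
  intro m hm
  exact ⟨u + m, val_add_natCast_sub u (lt_of_le_of_lt hm (v - u).val_lt)⟩

lemma arc_connected (hcycle : ∀ i : ZMod n, G.Adj i (i + 1)) (p q : ZMod n) :
    (G.induce (arc n p q)).Connected := by
  have hmem : ∀ i : Fin ((q - p).val + 1), p + (i : ℕ) ∈ arc n p q := fun i => by
    change (p + (i : ℕ) - p).val ≤ (q - p).val
    have := (q - p).val_lt
    rw [val_add_natCast_sub p (by omega)]
    exact Nat.lt_succ_iff.mp i.isLt
  let f : pathGraph ((q - p).val + 1) →g G.induce (arc n p q) :=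
    { toFun := fun i => ⟨p + (i : ℕ), hmem i⟩
      map_rel' := by
        intro i j hij
        rcases pathGraph_adj.mp hij with h | h
        · simpa [← h, add_assoc] using hcycle (p + (i : ℕ))
        · simpa [← h, add_assoc] using (hcycle (p + (j : ℕ))).symm }
  refine (pathGraph_connected _).map f fun ⟨z, hz⟩ => ⟨⟨(z - p).val, Nat.lt_succ_of_le hz⟩, ?_⟩
  exact Subtype.ext (add_val_sub p z)

/-- Two crossing chords, together with the four arcs of the outer cycle between their
endpoints, form a `K₄` minor. -/
lemma isMinorOf_K4_of_crossing (hcycle : ∀ i : ZMod n, G.Adj i (i + 1)) {a b c d : ZMod n}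
    (hab : G.Adj a b) (hcd : G.Adj c d) (hc : 0 < (c - a).val) (hcb : (c - a).val < (b - a).val)
    (hbd : (b - a).val < (d - a).val) : IsMinorOf (completeGraph (Fin 4)) G := by
  set i := (c - a).val
  set j := (b - a).val
  set l := (d - a).val
  have hl : l < n := (d - a).val_lt
  let lo : Fin 4 → ℕ := ![0, i, j, l]
  let hi : Fin 4 → ℕ := ![i - 1, j - 1, l - 1, n - 1]
  have hlohi : ∀ t, lo t ≤ hi t ∧ hi t < n := by
    intro t; fin_cases t <;> simp [lo, hi] <;> omega
  have hmem : ∀ t z, z ∈ arc n (a + lo t) (a + hi t) ↔ lo t ≤ (z - a).val ∧ (z - a).val ≤ hi t := by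
    intro t z
    have h := hlohi t
    have hlo : (a + lo t - a).val = lo t := val_add_natCast_sub a (by omega)
    have hhi : (a + hi t - a).val = hi t := val_add_natCast_sub a h.2
    rw [mem_arc_iff_of_le a (by rw [hlo, hhi]; exact h.1), hlo, hhi]
  have hnat : ∀ t (m : ℕ), lo t ≤ m → m ≤ hi t → a + m ∈ arc n (a + lo t) (a + hi t) :=
    fun t m h1 h2 => (hmem t _).2 <| by
      rw [val_add_natCast_sub a (by have := hlohi t; omega)]
      exact ⟨h1, h2⟩
  have hstep : ∀ m : ℕ, 0 < m → G.Adj (a + (m - 1 : ℕ)) (a + m) := fun m hm => by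
    simpa [add_assoc, Nat.cast_sub (Nat.one_le_iff_ne_zero.mpr hm.ne')] using
      hcycle (a + (m - 1 : ℕ))
  refine isMinorOf_completeGraph_of_lt (fun t => arc n (a + lo t) (a + hi t))
    (fun t => ⟨_, hnat t (lo t) le_rfl (hlohi t).1⟩) (fun t => arc_connected hcycle _ _) ?_ ?_
  · intro s t hst
    refine Set.disjoint_left.mpr fun z hs ht => ?_
    rw [hmem] at hs ht
    fin_cases s <;> fin_cases t <;> simp [lo, hi] at hs ht hst <;> omega
  · intro s t hst
    have hpt : ∀ t z, lo t ≤ (z - a).val → (z - a).val ≤ hi t → z ∈ arc n (a + lo t) (a + hi t) :=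
      fun t z h1 h2 => (hmem t z).2 ⟨h1, h2⟩
    have hwrap : G.Adj a (a + (n - 1 : ℕ)) := by
      simpa using (hstep n (Nat.pos_of_neZero n)).symm
    fin_cases s <;> fin_cases t <;> simp at hst
    · exact ⟨_, hnat 0 (i - 1) (by simp [lo]) (by simp [hi]), _,
        hnat 1 i (by simp [lo]) (by simp [hi]; omega), hstep i hc⟩
    · exact ⟨a, hpt 0 a (by simp [lo]) (by simp), b, hpt 2 b le_rfl (by simp [hi]; omega),
        hab⟩
    · exact ⟨a, hpt 0 a (by simp [lo]) (by simp), _,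
        hnat 3 (n - 1) (by simp [lo]; omega) (by simp [hi]), hwrap⟩
    · exact ⟨_, hnat 1 (j - 1) (by simp [lo]; omega) (by simp [hi]), _,
        hnat 2 j (by simp [lo]) (by simp [hi]; omega), hstep j (by omega)⟩
    · exact ⟨c, hpt 1 c le_rfl (by simp [hi]; omega), d, hpt 3 d le_rfl (by simp [hi]; omega),
        hcd⟩
    · exact ⟨_, hnat 2 (l - 1) (by simp [lo]; omega) (by simp [hi]), _,
        hnat 3 l (by simp [lo]) (by simp [hi]; omega), hstep l (by omega)⟩

/-- No two chords of the cycle `0, 1, …, n - 1` cross: for an edge `ab`, an edge with one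
endpoint strictly inside the arc from `a` to `b` has the other one in that arc too. -/
def Noncrossing (H : SimpleGraph (ZMod n)) : Prop :=
  ∀ ⦃a b c d : ZMod n⦄, H.Adj a b → H.Adj c d → 0 < (c - a).val → (c - a).val < (b - a).val →
    (d - a).val ≤ (b - a).val

lemma noncrossing_of_not_isMinorOf_K4 (hcycle : ∀ i : ZMod n, G.Adj i (i + 1))
    (hK4 : ¬ IsMinorOf (completeGraph (Fin 4)) G) : Noncrossing G :=
  fun _ _ _ _ hab hcd hc hcb => not_lt.mp fun hbd =>
    hK4 (isMinorOf_K4_of_crossing hcycle hab hcd hc hcb hbd)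

def splitEdges (H : SimpleGraph (ZMod n)) (u v : ZMod n) : Set (Sym2 (ZMod n)) :=
  H.edgeSet ∩ (arc n u v).sym2

lemma exists_farthest_adj (hcycle : ∀ i : ZMod n, G.Adj i (i + 1)) {u v : ZMod n}
    (hd : 2 ≤ (v - u).val) :
    ∃ w, G.Adj u w ∧ (w - u).val < (v - u).val ∧
      ∀ z, G.Adj u z → (z - u).val < (v - u).val → (z - u).val ≤ (w - u).val := by
  classical
  have hdn := (v - u).val_lt
  set k := Nat.findGreatest (fun m : ℕ => G.Adj u (u + m)) ((v - u).val - 1)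
  have hk : k ≤ (v - u).val - 1 := Nat.findGreatest_le _
  have h1 : G.Adj u (u + (1 : ℕ)) := by simpa using hcycle u
  have hk1 : G.Adj u (u + k) :=
    Nat.findGreatest_spec (P := fun m : ℕ => G.Adj u (u + m)) (m := 1) (by omega) h1
  refine ⟨u + k, hk1, ?_, fun z hz hzd => ?_⟩
  · rw [val_add_natCast_sub u (by omega)]
    omega
  · rw [val_add_natCast_sub u (by omega)]
    exact Nat.le_findGreatest (by omega) (by rwa [add_val_sub])

lemma splitEdges_sdiff_subset (hnc : Noncrossing G) {u v w : ZMod n}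
    (huw : G.Adj u w) (hwv : (w - u).val < (v - u).val)
    (hfar : ∀ z, G.Adj u z → (z - u).val < (v - u).val → (z - u).val ≤ (w - u).val) :
    splitEdges G u v \ {s(u, v)} ⊆ splitEdges G u w ∪ splitEdges G w v := by
  have hmem := fun z => mem_arc_iff_of_le (q := v) (z := z) u hwv.le
  have key : ∀ a b, G.Adj a b → (a - u).val < (b - u).val → (b - u).val ≤ (v - u).val →
      s(a, b) ≠ s(u, v) → s(a, b) ∈ splitEdges G u w ∪ splitEdges G w v := by
    intro a b hab hlt hbv hne
    by_cases hbw : (b - u).val ≤ (w - u).val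
    · exact Or.inl ⟨hab, hlt.le.trans hbw, hbw⟩
    by_cases haw : (w - u).val ≤ (a - u).val
    · exact Or.inr ⟨hab, (hmem a).2 ⟨haw, hlt.le.trans hbv⟩, (hmem b).2 ⟨haw.trans hlt.le, hbv⟩⟩
    exfalso
    rcases Nat.eq_zero_or_pos (a - u).val with ha | ha
    · obtain rfl : a = u := sub_eq_zero.mp ((ZMod.val_eq_zero _).mp ha)
      have hb : (b - a).val = (v - a).val := by
        by_contra hb
        exact hbw (hfar b hab (lt_of_le_of_ne hbv hb))
      exact hne (by rw [eq_of_val_sub_eq hb])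
    · exact hbw (hnc huw hab ha (not_le.mp haw))
  rintro e ⟨⟨he, hea⟩, hne⟩
  induction e using Sym2.ind with
  | h a b =>
    have hab : G.Adj a b := he
    have hne' : (a - u).val ≠ (b - u).val := fun h => hab.ne (eq_of_val_sub_eq h)
    rcases lt_or_gt_of_ne hne' with h | h
    · exact key a b hab h hea.2 hne
    · rw [Sym2.eq_swap (a := a)] at hne ⊢
      exact key b a hab.symm h hea.1 hne

lemma splitEdges_sdiff_eq_empty {u v : ZMod n}
    (hd : (v - u).val ≤ 1) : splitEdges G u v \ {s(u, v)} = ∅ := by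
  have huv : ∀ z ∈ arc n u v, z = u ∨ z = v := fun z hz => by
    have hz : (z - u).val ≤ (v - u).val := hz
    rcases Nat.eq_zero_or_pos (z - u).val with h | h
    · exact Or.inl (sub_eq_zero.mp ((ZMod.val_eq_zero _).mp h))
    · exact Or.inr (eq_of_val_sub_eq (a := u) (by omega))
  refine Set.eq_empty_of_forall_notMem fun e ⟨⟨he, hea⟩, hne⟩ => ?_
  induction e using Sym2.ind with
  | h a b =>
    have hab : G.Adj a b := he
    rcases huv a hea.1 with rfl | rfl <;> rcases huv b hea.2 with rfl | rfl
    · exact hab.ne rfl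
    · exact hne rfl
    · exact hne Sym2.eq_swap
    · exact hab.ne rfl

/-- Induction on the length of the arc, cut along the chord from `u` to its farthest neighbour
inside it. -/
lemma ncard_splitEdges_sdiff_le (hcycle : ∀ i : ZMod n, G.Adj i (i + 1)) (hnc : Noncrossing G)
    (u v : ZMod n) : (splitEdges G u v \ {s(u, v)}).ncard ≤ 2 * (v - u).val - 2 := by
  obtain ⟨d, hd⟩ : ∃ d, (v - u).val = d := ⟨_, rfl⟩
  induction d using Nat.strong_induction_on generalizing u v with
  | _ d ih =>
  rcases lt_or_ge d 2 with hsmall | hbig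
  · rw [splitEdges_sdiff_eq_empty (by omega), Set.ncard_empty]
    exact Nat.zero_le _
  obtain ⟨w, huw, hwv, hfar⟩ := exists_farthest_adj hcycle (hd ▸ hbig)
  have hk := val_sub_pos_of_ne huw.ne'
  have hvw : (v - w).val = d - (w - u).val := by
    rw [val_sub_eq_ite u v w, if_pos hwv.le, hd]
  have h1 := ih _ (hd ▸ hwv) u w rfl
  have h2 := ih _ (by omega) w v hvw
  have h1' := Set.pred_ncard_le_ncard_sdiff_singleton (splitEdges G u w) s(u, w)
  have h2' := Set.pred_ncard_le_ncard_sdiff_singleton (splitEdges G w v) s(w, v)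
  calc (splitEdges G u v \ {s(u, v)}).ncard
      ≤ (splitEdges G u w ∪ splitEdges G w v).ncard :=
        Set.ncard_le_ncard (splitEdges_sdiff_subset hnc huw hwv hfar)
    _ ≤ (splitEdges G u w).ncard + (splitEdges G w v).ncard := Set.ncard_union_le _ _
    _ ≤ 2 * (v - u).val - 2 := by omega

lemma edgeSet_subset_splitEdges_union (hnc : Noncrossing G)
    {u v : ZMod n} (huv : G.Adj u v) : G.edgeSet ⊆ splitEdges G u v ∪ splitEdges G v u := by
  have hout : ∀ a b, G.Adj a b → (v - u).val < (a - u).val → a ∈ arc n v u ∧ b ∈ arc n v u := by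
    intro a b hab ha
    refine ⟨(mem_arc_swap_iff huv.ne).2 (Or.inr ha.le), (mem_arc_swap_iff huv.ne).2 ?_⟩
    by_contra! hb
    exact ha.not_ge (hnc huv hab.symm (val_sub_pos_of_ne hb.1) hb.2)
  intro e he
  induction e using Sym2.ind with
  | h a b =>
    have hab : G.Adj a b := he
    by_cases ha : a ∈ arc n u v
    · by_cases hb : b ∈ arc n u v
      · exact Or.inl ⟨hab, ha, hb⟩
      · exact Or.inr ⟨hab, (hout b a hab.symm (not_le.mp hb)).symm⟩
    · exact Or.inr ⟨hab, hout a b hab (not_le.mp ha)⟩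

/-- Otherwise, for the farthest neighbour `w` of `u` inside the arc, the arc from `w` to `v`
lacks its chord, and the bound `ncard_splitEdges_sdiff_le` on the three arcs cut by `uw` and `uv`
leaves room for at most `2 n - 4` edges. -/
lemma exists_adj_adj_of_maximal (hcycle : ∀ i : ZMod n, G.Adj i (i + 1)) (hnc : Noncrossing G)
    (hmax : 2 * n - 3 ≤ G.edgeSet.ncard) {u v : ZMod n} (huv : G.Adj u v)
    (hd : 2 ≤ (v - u).val) : ∃ w, G.Adj u w ∧ G.Adj w v ∧ (w - u).val < (v - u).val := by
  obtain ⟨w, huw, hwv, hfar⟩ := exists_farthest_adj hcycle hd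
  refine ⟨w, huw, ?_, hwv⟩
  by_contra hnadj
  have hdn := (v - u).val_lt
  have hk := val_sub_pos_of_ne huw.ne'
  have hvw : (v - w).val = (v - u).val - (w - u).val := by
    rw [val_sub_eq_ite u v w, if_pos hwv.le]
  have hcover : G.edgeSet ⊆
      splitEdges G u w ∪ splitEdges G w v ∪ {s(u, v)} ∪ (splitEdges G v u \ {s(v, u)}) := by
    intro e he
    rcases edgeSet_subset_splitEdges_union hnc huv he with h | h
    · by_cases heq : e = s(u, v)
      · exact Or.inl (Or.inr heq)
      · exact Or.inl (Or.inl (splitEdges_sdiff_subset hnc huw hwv hfar ⟨h, heq⟩))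
    · by_cases heq : e = s(v, u)
      · exact Or.inl (Or.inr (heq.trans Sym2.eq_swap))
      · exact Or.inr ⟨h, heq⟩
  have h1 := ncard_splitEdges_sdiff_le hcycle hnc u w
  have h2 := ncard_splitEdges_sdiff_le hcycle hnc w v
  have h3 := ncard_splitEdges_sdiff_le hcycle hnc v u
  rw [Set.sdiff_singleton_eq_self fun h => hnadj h.1, hvw] at h2
  rw [val_sub_eq_ite u u v, sub_self, ZMod.val_zero, if_neg (by omega), add_zero] at h3
  have h1' := Set.pred_ncard_le_ncard_sdiff_singleton (splitEdges G u w) s(u, w)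
  have e1 := Set.ncard_le_ncard hcover
  have e2 := Set.ncard_union_le (splitEdges G u w ∪ splitEdges G w v ∪ {s(u, v)})
    (splitEdges G v u \ {s(v, u)})
  have e3 := Set.ncard_union_le (splitEdges G u w ∪ splitEdges G w v) {s(u, v)}
  have e4 := Set.ncard_union_le (splitEdges G u w) (splitEdges G w v)
  rw [Set.ncard_singleton] at e3
  omega

lemma exists_adj_arc_subset_sdiff (hcycle : ∀ i : ZMod n, G.Adj i (i + 1)) (hnc : Noncrossing G)
    (hmax : 2 * n - 3 ≤ G.edgeSet.ncard) {ℓ : ℕ} (hℓ : 1 ≤ ℓ) {u v : ZMod n} (huv : G.Adj u v)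
    (hd : 2 * ℓ + 1 ≤ (v - u).val) :
    ∃ u' v', G.Adj u' v' ∧ ℓ + 1 ≤ (v' - u').val ∧ (v' - u').val < (v - u).val ∧
      (arc n u' v' ⊆ arc n u v \ {u} ∨ arc n u' v' ⊆ arc n u v \ {v}) := by
  obtain ⟨w, huw, hwv, hw⟩ := exists_adj_adj_of_maximal hcycle hnc hmax huv (by omega)
  have hk := val_sub_pos_of_ne huw.ne'
  rcases le_or_gt (ℓ + 1) (w - u).val with hlong | hshort
  · refine ⟨u, w, huw, hlong, hw, Or.inr fun z hz => ⟨le_trans hz hw.le, ?_⟩⟩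
    rintro rfl
    exact (not_le.mpr hw) hz
  · have hvw : (v - w).val = (v - u).val - (w - u).val := by
      rw [val_sub_eq_ite u v w, if_pos hw.le]
    refine ⟨w, v, hwv, by omega, by omega, Or.inl fun z hz => ?_⟩
    have h := (mem_arc_iff_of_le u hw.le).1 hz
    refine ⟨h.2, ?_⟩
    rintro rfl
    rw [sub_self, ZMod.val_zero] at h
    omega

lemma exists_adj_arc_subset (hcycle : ∀ i : ZMod n, G.Adj i (i + 1)) (hnc : Noncrossing G)
    (hmax : 2 * n - 3 ≤ G.edgeSet.ncard) {ℓ : ℕ} (hℓ : 1 ≤ ℓ) {u v : ZMod n} (huv : G.Adj u v)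
    (hd : ℓ + 1 ≤ (v - u).val) :
    ∃ u' v', G.Adj u' v' ∧ arc n u' v' ⊆ arc n u v ∧
      ℓ + 1 ≤ (v' - u').val ∧ (v' - u').val ≤ 2 * ℓ := by
  obtain ⟨d, hd'⟩ : ∃ d, (v - u).val = d := ⟨_, rfl⟩
  induction d using Nat.strong_induction_on generalizing u v with
  | _ d ih =>
  rcases le_or_gt (v - u).val (2 * ℓ) with hshort | hlong
  · exact ⟨u, v, huv, subset_rfl, hd, hshort⟩
  obtain ⟨u', v', huv', hlen', hlt', hsub'⟩ :=
    exists_adj_arc_subset_sdiff hcycle hnc hmax hℓ huv hlong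
  obtain ⟨u'', v'', huv'', hsub'', hlo, hhi⟩ := ih _ (hd' ▸ hlt') huv' hlen' rfl
  refine ⟨u'', v'', huv'', hsub''.trans ?_, hlo, hhi⟩
  rcases hsub' with h | h <;> exact h.trans Set.sdiff_subset

end

/-- Decomposition lemma: a maximal outerplanar graph on `n ≥ ℓ+2` vertices (with
canonical outer cycle `0,1,…,n-1` on `ZMod n`), with `x(x+1)` an edge of the outer face,
has an edge `uv` such that the `uv`-split subgraph on the arc from `u` to `v` has `h`
vertices with `ℓ+2 ≤ h ≤ 2ℓ+1` and, if `uv ≠ x(x+1)`, does not contain the edge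
`x(x+1)`. -/
theorem stmt10 (n ℓ : ℕ) [NeZero n] (hl : 1 ≤ ℓ) (hn : ℓ + 2 ≤ n)
    (G : SimpleGraph (ZMod n)) (houter : IsOuterplanar G)
    (hcycle : ∀ i : ZMod n, G.Adj i (i + 1))
    (hmax : G.edgeSet.ncard = 2 * n - 3)
    (x : ZMod n) :
    ∃ u v : ZMod n, G.Adj u v ∧
      ℓ + 2 ≤ (arc n u v).ncard ∧ (arc n u v).ncard ≤ 2 * ℓ + 1 ∧
      (¬ (u = x ∧ v = x + 1 ∨ u = x + 1 ∧ v = x) →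
        ¬ (x ∈ arc n u v ∧ x + 1 ∈ arc n u v)) := by
  have hnc := noncrossing_of_not_isMinorOf_K4 hcycle houter.1
  have hx : (x - (x + 1)).val = n - 1 := by
    have h1 : (x + 1 - x).val = 1 := by simpa using val_add_natCast_sub x (m := 1) (by omega)
    rw [val_sub_eq_ite x x (x + 1), h1, sub_self, ZMod.val_zero, if_neg (by omega)]
    omega
  rcases le_or_gt (n - 1) (2 * ℓ) with hsmall | hbig
  · refine ⟨x + 1, x, (hcycle x).symm, ?_, ?_, fun h => absurd (Or.inr ⟨rfl, rfl⟩) h⟩ <;>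
      rw [ncard_arc, hx] <;> omega
  obtain ⟨u', v', huv', hlen', -, hsub'⟩ :=
    exists_adj_arc_subset_sdiff hcycle hnc hmax.ge hl (hcycle x).symm (by omega)
  obtain ⟨u, v, huv, hsub, hlo, hhi⟩ := exists_adj_arc_subset hcycle hnc hmax.ge hl huv' hlen'
  refine ⟨u, v, huv, by rw [ncard_arc]; omega, by rw [ncard_arc]; omega, fun _ ⟨hx0, hx1⟩ => ?_⟩
  rcases hsub' with h | h
  · exact (h (hsub hx1)).2 rfl
  · exact (h (hsub hx0)).2 rfl
end

section
/- Every graph G with n vertices, m edges, and maximum degree at least 6 has a subset I ⊆ V(G) with |I| ≥ (54/59)·n - (9/59)·m - 35/59 such that the induced subgraph G[I] has maximum degree at most 4. -/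
open SimpleGraph

/-!
Peel off, one at a time, vertices of inner degree at least `6`: each removal destroys at least
`6` edges, so the surviving set `B` has `|B| ≥ n - (2m - 2e(B))/12`, where `e(B)` is the number
of edges inside `B`. Now `G[B]` has maximum degree at most `5`, and there are two ways to finish.
Peeling vertices of degree at least `5` from `B` loses at most `2e(B)/10` vertices. Alternatively,
embed `G[B]` into a `5`-regular graph made of `32` copies of `G[B]`, take a small dominating set
there, and remove its trace on the copy of `B` it meets least: this kills every vertex of degree
`5` and costs at most `5|B|/14`.
The better of the two bounds always beats `(54n - 9m - 35)/59`.
-/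

open Finset

namespace SimpleGraph

variable {V : Type*} [Fintype V] [DecidableEq V] (G : SimpleGraph V) [DecidableRel G.Adj]

def innerDegree (A : Finset V) (v : V) : ℕ := #(G.neighborFinset v ∩ A)

def innerDegreeSum (A : Finset V) : ℕ := ∑ v ∈ A, G.innerDegree A v

variable {G}

lemma innerDegree_mono {A B : Finset V} (h : A ⊆ B) (v : V) :
    G.innerDegree A v ≤ G.innerDegree B v :=
  card_le_card (inter_subset_inter_left h)

lemma innerDegree_erase {A : Finset V} {v : V} (hv : v ∈ A) (u : V) :
    G.innerDegree A u = G.innerDegree (A.erase v) u + if G.Adj u v then 1 else 0 := by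
  rw [innerDegree, innerDegree, inter_erase]
  split_ifs with h
  · rw [card_erase_add_one (mem_inter.2 ⟨(G.mem_neighborFinset u v).2 h, hv⟩)]
  · rw [erase_eq_of_notMem fun hm => h ((G.mem_neighborFinset u v).1 (mem_inter.1 hm).1),
      add_zero]

lemma innerDegreeSum_erase {A : Finset V} {v : V} (hv : v ∈ A) :
    G.innerDegreeSum A = G.innerDegreeSum (A.erase v) + 2 * G.innerDegree A v := by
  have hback : ∑ u ∈ A.erase v, (if G.Adj u v then 1 else 0) = G.innerDegree A v := by
    rw [sum_boole, Nat.cast_id, innerDegree]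
    congr 1
    ext u
    simp only [mem_filter, mem_erase, mem_inter, mem_neighborFinset]
    exact ⟨fun ⟨⟨_, hu⟩, h⟩ => ⟨h.symm, hu⟩, fun ⟨h, hu⟩ => ⟨⟨h.ne', hu⟩, h.symm⟩⟩
  rw [innerDegreeSum, innerDegreeSum, ← add_sum_erase A _ hv,
    sum_congr rfl fun u _ => innerDegree_erase hv u, sum_add_distrib, hback]
  ring

lemma innerDegreeSum_univ : G.innerDegreeSum univ = 2 * #G.edgeFinset := by
  simp only [innerDegreeSum, innerDegree, inter_univ, card_neighborFinset_eq_degree,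
    sum_degrees_eq_twice_card_edges]

lemma ncard_neighborSet_inter_coe (A : Finset V) (v : V) :
    (G.neighborSet v ∩ ↑A).ncard = G.innerDegree A v := by
  rw [← coe_neighborFinset, ← coe_inter, Set.ncard_coe_finset, innerDegree]

lemma innerDegree_lt_of_adj {A B : Finset V} (h : B ⊆ A) {u v : V} (huA : u ∈ A) (huB : u ∉ B)
    (hvu : G.Adj v u) : G.innerDegree B v < G.innerDegree A v :=
  card_lt_card <| (ssubset_iff_of_subset (inter_subset_inter_left h)).2
    ⟨u, mem_inter.2 ⟨(G.mem_neighborFinset v u).2 hvu, huA⟩, fun hu => huB (mem_inter.1 hu).2⟩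

theorem exists_subset_innerDegree_le (d : ℕ) (A : Finset V) :
    ∃ B ⊆ A, (∀ v ∈ B, G.innerDegree B v ≤ d) ∧
      2 * (d + 1) * #A + G.innerDegreeSum B ≤ 2 * (d + 1) * #B + G.innerDegreeSum A := by
  induction A using Finset.strongInduction with
  | H A ih =>
    by_cases hA : ∀ v ∈ A, G.innerDegree A v ≤ d
    · exact ⟨A, subset_rfl, hA, le_rfl⟩
    push Not at hA
    obtain ⟨v, hv, hdeg⟩ := hA
    obtain ⟨B, hBA, hB, hcount⟩ := ih (A.erase v) (erase_ssubset hv)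
    refine ⟨B, hBA.trans (erase_subset v A), hB, ?_⟩
    have := card_erase_add_one hv
    have := innerDegreeSum_erase (G := G) hv
    nlinarith

def RegularDominationBound (r : ℕ) (c : ℝ) : Prop :=
  ∀ (h : ℕ) (H : SimpleGraph (Fin h)), (∀ v, (H.neighborSet v).ncard = r) →
    ∃ D : Set (Fin h), (∀ v, v ∈ D ∨ ∃ u ∈ D, H.Adj u v) ∧ (D.ncard : ℝ) ≤ c * h

lemma RegularDominationBound.exists_finset {r : ℕ} {c : ℝ} (hb : RegularDominationBound r c)
    {W : Type*} [Fintype W] (H : SimpleGraph W)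
    (hH : ∀ v, (H.neighborSet v).ncard = r) :
    ∃ D : Finset W, (∀ v, v ∈ D ∨ ∃ u ∈ D, H.Adj u v) ∧ (#D : ℝ) ≤ c * Fintype.card W := by
  set e := Fintype.equivFin W
  have hreg : ∀ i, ((H.comap e.symm).neighborSet i).ncard = r := fun i => by
    rw [← hH (e.symm i), ← Set.ncard_image_of_injective _ e.symm.injective]
    congr 1
    ext w
    simp
  obtain ⟨D, hdom, hcard⟩ := hb _ _ hreg
  refine ⟨(Set.toFinite D).toFinset.map e.symm.toEmbedding, fun v => ?_, ?_⟩
  · rcases hdom (e v) with h | ⟨u, hu, huv⟩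
    · exact .inl (by simpa using h)
    · exact .inr ⟨e.symm u, by simpa using hu, by simpa using huv⟩
  · rwa [card_map, ← Set.ncard_eq_toFinset_card]

lemma cube_add_single_add_single {r : ℕ} (f : Fin r → ZMod 2) (k : Fin r) :
    f + Pi.single k 1 + Pi.single k 1 = f := by
  ext i
  rw [Pi.add_apply, Pi.add_apply, add_assoc, CharTwo.add_self_eq_zero, add_zero]

lemma cube_add_single_injective {r : ℕ} (f : Fin r → ZMod 2) :
    Function.Injective fun k : Fin r => f + Pi.single k 1 := by
  intro k l h
  by_contra hkl
  simpa [Pi.single_apply, hkl] using congrFun (add_left_cancel h) k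

variable (G) in
/-- `2 ^ r` copies of `G[A]`, indexed by the cube `(ZMod 2) ^ r`; a vertex of inner degree
`r - d` is also joined to its own copies along the first `d` cube directions. When `G[A]` has
maximum degree at most `r` this graph is `r`-regular, and vertices of inner degree `r` get no
cube edges. -/
def regularization (r : ℕ) (A : Finset V) : SimpleGraph (A × (Fin r → ZMod 2)) where
  Adj p q := (G.Adj p.1 q.1 ∧ p.2 = q.2) ∨
    (p.1 = q.1 ∧ ∃ k : Fin r, (k : ℕ) < r - G.innerDegree A p.1 ∧ q.2 = p.2 + Pi.single k 1)
  symm := ⟨by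
    rintro ⟨v, f⟩ ⟨w, g⟩ (⟨h, rfl⟩ | ⟨rfl, k, hk, rfl⟩)
    · exact .inl ⟨h.symm, rfl⟩
    · exact .inr ⟨rfl, k, hk, (cube_add_single_add_single f k).symm⟩⟩
  loopless := ⟨by
    rintro ⟨v, f⟩ (⟨h, -⟩ | ⟨-, k, -, h⟩)
    · exact G.loopless.irrefl v h
    · simpa using congrFun h k⟩

lemma ncard_neighborSet_regularization {r : ℕ} {A : Finset V}
    (hA : ∀ v ∈ A, G.innerDegree A v ≤ r) (p : A × (Fin r → ZMod 2)) :
    ((G.regularization r A).neighborSet p).ncard = r := by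
  obtain ⟨v, f⟩ := p
  set N : Finset A := (G.neighborFinset v).subtype (· ∈ A)
  set K : Finset (Fin r) := {k | (k : ℕ) < r - G.innerDegree A v}
  have hsplit : (G.regularization r A).neighborSet (v, f) =
      (fun w => (w, f)) '' ↑N ∪ (fun k => (v, f + Pi.single k 1)) '' ↑K := by
    ext ⟨w, g⟩
    simp only [mem_neighborSet, regularization, Set.mem_union, Set.mem_image, N, K,
      coe_filter, mem_coe, mem_subtype, mem_neighborFinset, Prod.ext_iff, Set.mem_ofPred_eq,
      mem_univ, true_and]
    constructor
    · rintro (⟨h, rfl⟩ | ⟨rfl, k, hk, rfl⟩)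
      exacts [.inl ⟨w, h, rfl, rfl⟩, .inr ⟨k, hk, rfl, rfl⟩]
    · rintro (⟨_, h, rfl, rfl⟩ | ⟨k, hk, rfl, rfl⟩)
      exacts [.inl ⟨h, rfl⟩, .inr ⟨rfl, k, hk, rfl⟩]
  have hdisj : Disjoint ((fun w => (w, f)) '' ↑N) ((fun k => (v, f + Pi.single k 1)) '' ↑K) := by
    rw [Set.disjoint_left]
    rintro _ ⟨w, hw, rfl⟩ ⟨k, -, h⟩
    rw [mem_coe, mem_subtype, mem_neighborFinset, ← (Prod.mk.inj h).1] at hw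
    exact G.loopless.irrefl _ hw
  rw [hsplit, Set.ncard_union_eq hdisj, Set.ncard_image_of_injective _ (Prod.mk_left_injective f),
    Set.ncard_image_of_injective _ fun k l h => cube_add_single_injective f (congrArg Prod.snd h),
    Set.ncard_coe_finset, Set.ncard_coe_finset, card_subtype, filter_mem_eq_inter,
    Fin.card_filter_val_lt]
  have := hA v v.2
  rw [innerDegree] at this ⊢
  omega

theorem exists_dominating_of_innerDegree_eq {r : ℕ} {c : ℝ} (hb : RegularDominationBound r c)
    {A : Finset V} (hA : ∀ v ∈ A, G.innerDegree A v ≤ r) :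
    ∃ D ⊆ A, (#D : ℝ) ≤ c * #A ∧
      ∀ v ∈ A, G.innerDegree A v = r → v ∈ D ∨ ∃ u ∈ D, G.Adj u v := by
  obtain ⟨D, hdom, hcard⟩ := hb.exists_finset _ (ncard_neighborSet_regularization hA)
  obtain ⟨f, -, hf⟩ := exists_card_fiber_le_of_card_le_nsmul (s := D) (t := univ)
    (f := Prod.snd) (b := c * #A) univ_nonempty <| by
      rw [Fintype.card_prod, Fintype.card_coe, Nat.cast_mul] at hcard
      rw [card_univ, nsmul_eq_mul]
      exact hcard.trans_eq (by ring)
  set F := {p ∈ D | p.2 = f}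
  refine ⟨F.image (fun p => (p.1 : V)), fun _ h => ?_, (Nat.cast_le.2 card_image_le).trans hf, ?_⟩
  · obtain ⟨p, -, rfl⟩ := mem_image.1 h
    exact p.1.2
  · intro v hv hdeg
    rcases hdom (⟨v, hv⟩, f) with h | ⟨⟨u, g⟩, hu, (⟨huv, rfl⟩ | ⟨rfl, k, hk, -⟩)⟩
    · exact .inl (mem_image.2 ⟨_, mem_filter.2 ⟨h, rfl⟩, rfl⟩)
    · exact .inr ⟨u, mem_image.2 ⟨_, mem_filter.2 ⟨hu, rfl⟩, rfl⟩, huv⟩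
    · simp only [hdeg, Nat.sub_self] at hk
      exact absurd hk k.val.not_lt_zero

theorem exists_subset_innerDegree_lt {r : ℕ} {c : ℝ} (hb : RegularDominationBound r c)
    {A : Finset V} (hA : ∀ v ∈ A, G.innerDegree A v ≤ r) :
    ∃ I ⊆ A, (∀ v ∈ I, G.innerDegree I v < r) ∧ (1 - c) * #A ≤ #I := by
  obtain ⟨D, hDA, hcard, hdom⟩ := exists_dominating_of_innerDegree_eq hb hA
  refine ⟨A \ D, sdiff_subset, fun v hv => ?_, ?_⟩
  · obtain ⟨hvA, hvD⟩ := mem_sdiff.1 hv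
    have hle : G.innerDegree (A \ D) v ≤ G.innerDegree A v := innerDegree_mono sdiff_subset v
    obtain hlt | heq := (hle.trans (hA v hvA)).lt_or_eq
    · exact hlt
    have hfull : G.innerDegree A v = r := le_antisymm (hA v hvA) (heq ▸ hle)
    obtain hvD' | ⟨u, huD, huv⟩ := hdom v hvA hfull
    · exact absurd hvD' hvD
    · exact (innerDegree_lt_of_adj sdiff_subset (hDA huD) (fun hu => (mem_sdiff.1 hu).2 huD)
        huv.symm).trans_eq hfull
  · rw [card_sdiff_of_subset hDA, Nat.cast_sub (card_le_card hDA)]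
    linarith

end SimpleGraph

theorem stmt13_general {V : Type} [Fintype V] (G : SimpleGraph V)
    (hdom5 : ∀ (h : ℕ) (H : SimpleGraph (Fin h)),
      (∀ v, (H.neighborSet v).ncard = 5) →
      ∃ D : Set (Fin h), (∀ v, v ∈ D ∨ ∃ u ∈ D, H.Adj u v) ∧
        (D.ncard : ℝ) ≤ 5 * h / 14) :
    ∃ I : Set V,
      ((54 : ℝ) / 59) * (Fintype.card V : ℝ) - (9 / 59) * (G.edgeSet.ncard : ℝ) - 35 / 59
        ≤ (I.ncard : ℝ) ∧
      ∀ v ∈ I, ((G.neighborSet v) ∩ I).ncard ≤ 4 := by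
  classical
  have hb : RegularDominationBound 5 (5 / 14) := fun h H hH =>
    (hdom5 h H hH).imp fun _ hD => ⟨hD.1, hD.2.trans_eq (by ring)⟩
  suffices ∃ I : Finset V, 54 * (Fintype.card V : ℝ) - 9 * #G.edgeFinset - 35 ≤ 59 * #I ∧
      ∀ v ∈ I, G.innerDegree I v ≤ 4 by
    obtain ⟨I, hcard, hdeg⟩ := this
    refine ⟨I, ?_, fun v hv => (ncard_neighborSet_inter_coe I v).trans_le (hdeg v hv)⟩
    rw [Set.ncard_coe_finset, ← coe_edgeFinset, Set.ncard_coe_finset]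
    linarith
  obtain ⟨B, -, hB, hpeel⟩ := G.exists_subset_innerDegree_le 5 univ
  rw [innerDegreeSum_univ, card_univ] at hpeel
  have hB_card : 12 * (Fintype.card V : ℝ) + G.innerDegreeSum B ≤
      12 * #B + 2 * #G.edgeFinset := by exact_mod_cast hpeel
  -- once `innerDegreeSum B` is this large the dominating-set bound `9|B|/14` suffices,
  -- below it peeling the vertices of degree `5` does
  by_cases hdense : 225 * (#B : ℝ) ≤ 63 * G.innerDegreeSum B + 490
  · obtain ⟨I, -, hI, hcard⟩ := exists_subset_innerDegree_lt hb hB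
    exact ⟨I, by linarith, fun v hv => Nat.le_of_lt_succ (hI v hv)⟩
  · obtain ⟨I, -, hI, hcard⟩ := G.exists_subset_innerDegree_le 4 B
    have hI_card : 10 * (#B : ℝ) + G.innerDegreeSum I ≤ 10 * #I + G.innerDegreeSum B := by
      exact_mod_cast hcard
    exact ⟨I, by linarith [(G.innerDegreeSum I).cast_nonneg (α := ℝ)], hI⟩

/-- Every graph with `n` vertices, `m` edges and maximum degree at least `6` has a
vertex subset `I` with `|I| ≥ (54/59)·n - (9/59)·m - 35/59` inducing a subgraph of
maximum degree at most `4` (given the dominating-set bound for `5`-regular graphs). -/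
theorem stmt13 {V : Type} [Fintype V] (G : SimpleGraph V)
    (hdeg : ∃ v, 6 ≤ (G.neighborSet v).ncard)
    (hdom5 : ∀ (h : ℕ) (H : SimpleGraph (Fin h)),
      (∀ v, (H.neighborSet v).ncard = 5) →
      ∃ D : Set (Fin h), (∀ v, v ∈ D ∨ ∃ u ∈ D, H.Adj u v) ∧
        (D.ncard : ℝ) ≤ 5 * h / 14) :
    ∃ I : Set V,
      ((54 : ℝ) / 59) * (Fintype.card V : ℝ) - (9 / 59) * (G.edgeSet.ncard : ℝ) - 35 / 59
        ≤ (I.ncard : ℝ) ∧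
      ∀ v ∈ I, ((G.neighborSet v) ∩ I).ncard ≤ 4 :=
  stmt13_general G hdom5
end

section
/- Every graph G with n vertices and maximum degree at most 5 has a subset I ⊆ V(G) with |I| ≥ (35/78)·n - 8/13 such that the induced subgraph G[I] has maximum degree at most 3. -/
/-! A maximum cut `(A, Aᶜ)` cannot be improved by moving a single vertex to the other side, so
every vertex has at most half of its neighbours on its own side. With maximum degree at most `5`
this leaves at most `2` neighbours inside its own side, and the larger side has at least
`n / 2 ≥ 35 n / 78` vertices. -/

open SimpleGraph

namespace SimpleGraph

open Finset

variable {V : Type} (G : SimpleGraph V) [DecidableRel G.Adj]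

theorem card_interedges_comm (s t : Finset V) :
    #(G.interedges s t) = #(G.interedges t s) :=
  have := G.symm
  Rel.card_interedges_comm s t

variable [DecidableEq V]

theorem card_interedges_union_left {s₁ s₂ : Finset V} (h : Disjoint s₁ s₂) (t : Finset V) :
    #(G.interedges (s₁ ∪ s₂) t) = #(G.interedges s₁ t) + #(G.interedges s₂ t) := by
  rw [interedges_def, union_product, filter_union, card_union_of_disjoint]
  · rfl
  · exact G.interedges_disjoint_left h t

theorem card_interedges_singleton_left (v : V) [Fintype (G.neighborSet v)] (t : Finset V) :
    #(G.interedges {v} t) = #(G.neighborFinset v ∩ t) := by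
  refine card_nbij' Prod.snd (Prod.mk v) ?_ ?_ ?_ ?_
  · rintro ⟨a, b⟩ h
    obtain ⟨rfl, hb, hab⟩ := by simpa [mem_interedges_iff] using h
    simpa using ⟨hab, hb⟩
  · intro b h
    simp_all [mem_interedges_iff]
  · rintro ⟨a, b⟩ h
    simp_all [mem_interedges_iff]
  · intro b _
    rfl

theorem card_interedges_insert_left {s : Finset V} {v : V} [Fintype (G.neighborSet v)] (hv : v ∉ s)
    (t : Finset V) :
    #(G.interedges (insert v s) t) = #(G.neighborFinset v ∩ t) + #(G.interedges s t) := by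
  rw [insert_eq, G.card_interedges_union_left (disjoint_singleton_left.2 hv),
    card_interedges_singleton_left]

variable [Fintype V]

theorem card_interedges_erase_compl_add {A : Finset V} {v : V} (hv : v ∈ A) :
    #(G.interedges (A.erase v) (A.erase v)ᶜ) + #(G.neighborFinset v ∩ Aᶜ) =
      #(G.interedges A Aᶜ) + #(G.neighborFinset v ∩ A) := by
  have hvA : v ∉ Aᶜ := by simpa using hv
  have hN : G.neighborFinset v ∩ A.erase v = G.neighborFinset v ∩ A := by
    ext w
    by_cases hw : w = v <;> simp_all
  have hcut :
      #(G.interedges A Aᶜ) = #(G.neighborFinset v ∩ Aᶜ) + #(G.interedges (A.erase v) Aᶜ) := by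
    rw [← G.card_interedges_insert_left (notMem_erase v A), insert_erase hv]
  have hcut' : #(G.interedges (A.erase v) (A.erase v)ᶜ) =
      #(G.neighborFinset v ∩ A) + #(G.interedges (A.erase v) Aᶜ) := by
    rw [compl_erase, card_interedges_comm, G.card_interedges_insert_left hvA, hN,
      card_interedges_comm]
  omega

def IsMaxCut (A : Finset V) : Prop :=
  ∀ B : Finset V, #(G.interedges B Bᶜ) ≤ #(G.interedges A Aᶜ)

theorem exists_isMaxCut : ∃ A, G.IsMaxCut A := by
  obtain ⟨A, -, hA⟩ := exists_max_image univ (fun A : Finset V ↦ #(G.interedges A Aᶜ))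
    univ_nonempty
  exact ⟨A, fun B ↦ hA B (mem_univ B)⟩

variable {G}

theorem IsMaxCut.compl {A : Finset V} (hA : G.IsMaxCut A) : G.IsMaxCut Aᶜ := by
  intro B
  rw [compl_compl, card_interedges_comm G Aᶜ]
  exact hA B

theorem IsMaxCut.two_mul_card_neighborFinset_inter_le_degree {A : Finset V} (hA : G.IsMaxCut A)
    {v : V} (hv : v ∈ A) : 2 * #(G.neighborFinset v ∩ A) ≤ G.degree v := by
  have hmove := G.card_interedges_erase_compl_add hv
  have hsplit : #(G.neighborFinset v ∩ A) + #(G.neighborFinset v ∩ Aᶜ) = G.degree v := by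
    rw [← sdiff_eq_inter_compl, card_inter_add_card_sdiff, card_neighborFinset_eq_degree]
  have := hA (A.erase v)
  omega

theorem exists_card_le_two_mul_card_and_two_mul_card_neighborFinset_inter_le_degree :
    ∃ I : Finset V, Fintype.card V ≤ 2 * #I ∧
      ∀ v ∈ I, 2 * #(G.neighborFinset v ∩ I) ≤ G.degree v := by
  obtain ⟨A, hA⟩ := G.exists_isMaxCut
  have hcard := card_add_card_compl A
  rcases le_total #Aᶜ #A with hle | hle
  · exact ⟨A, by omega, fun v ↦ hA.two_mul_card_neighborFinset_inter_le_degree⟩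
  · exact ⟨Aᶜ, by omega, fun v ↦ hA.compl.two_mul_card_neighborFinset_inter_le_degree⟩

end SimpleGraph

theorem stmt14_general {V : Type} [Fintype V] (G : SimpleGraph V)
    (hdeg : ∀ v, (G.neighborSet v).ncard ≤ 5) :
    ∃ I : Set V,
      ((35 : ℝ) / 78) * (Fintype.card V : ℝ) - 8 / 13 ≤ (I.ncard : ℝ) ∧
      ∀ v ∈ I, ((G.neighborSet v) ∩ I).ncard ≤ 3 := by
  classical
  obtain ⟨I, hI, hsparse⟩ :=
    G.exists_card_le_two_mul_card_and_two_mul_card_neighborFinset_inter_le_degree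
  refine ⟨I, ?_, fun v hv ↦ ?_⟩
  · rw [Set.ncard_coe_finset]
    have : (Fintype.card V : ℝ) ≤ 2 * I.card := mod_cast hI
    linarith [(Fintype.card V).cast_nonneg (α := ℝ)]
  · have hdeg_v : G.degree v ≤ 5 := by
      rw [← card_neighborFinset_eq_degree, ← Set.ncard_coe_finset, G.coe_neighborFinset]
      exact hdeg v
    rw [← G.coe_neighborFinset, ← Finset.coe_inter, Set.ncard_coe_finset]
    have := hsparse v hv
    omega

/-- Every graph with `n` vertices and maximum degree at most `5` has a vertex subset
`I` with `|I| ≥ (35/78)·n - 8/13` inducing a subgraph of maximum degree at most `3`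
(given the dominating-set bound for `4`-regular graphs). -/
theorem stmt14 {V : Type} [Fintype V] (G : SimpleGraph V)
    (hdeg : ∀ v, (G.neighborSet v).ncard ≤ 5)
    (hdom4 : ∀ (h : ℕ) (H : SimpleGraph (Fin h)),
      (∀ v, (H.neighborSet v).ncard = 4) →
      ∃ D : Set (Fin h), (∀ v, v ∈ D ∨ ∃ u ∈ D, H.Adj u v) ∧
        (D.ncard : ℝ) ≤ 4 * h / 11) :
    ∃ I : Set V,
      ((35 : ℝ) / 78) * (Fintype.card V : ℝ) - 8 / 13 ≤ (I.ncard : ℝ) ∧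
      ∀ v ∈ I, ((G.neighborSet v) ∩ I).ncard ≤ 3 :=
  stmt14_general G hdeg
end
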